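/- With notation as above, ∑_{x : x_i = c⁽¹⁾} π(x) · exp((1/T)·(𝟙{x_{i+1} = c⁽²⁾} - 𝟙{x_{i+1} ≠ c⁽²⁾} - 𝟙{x_{i+1} = c⁽¹⁾} + 𝟙{x_{i+1} ≠ c⁽¹⁾})) = 1/3. -/
import Mathlib

set_option maxHeartbeats 800000

open Finset

/-- Unnormalized Gibbs weight of the 1-D Ising model with `N` colors on `n` sites:
`w(x) = exp((1/T) ∑_{k=1}^{n-1} (𝟙{x_k = x_{k+1}} - 𝟙{x_k ≠ x_{k+1}}))`. -/
noncomputable def isingW (N n : ℕ) (T : ℝ) (x : Fin n → Fin N) : ℝ :=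
  Real.exp (1 / T * ∑ k : Fin (n - 1),
    (if x ⟨k.1, by have := k.2; omega⟩ = x ⟨k.1 + 1, by have := k.2; omega⟩
      then (1 : ℝ) else -1))

/-- Partition function of the 1-D Ising model. -/
noncomputable def isingZ (N n : ℕ) (T : ℝ) : ℝ :=
  ∑ x : Fin n → Fin N, isingW N n T x

/-- Normalized Gibbs measure of the 1-D Ising model. -/
noncomputable def isingPi (N n : ℕ) (T : ℝ) (x : Fin n → Fin N) : ℝ :=
  isingW N n T x / isingZ N n T

lemma isingW_comp (N n : ℕ) (T : ℝ) (σ : Equiv.Perm (Fin N)) (x : Fin n → Fin N) :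
    isingW N n T (σ ∘ x) = isingW N n T x := by
  unfold isingW
  congr 2
  apply Finset.sum_congr rfl
  intro k _
  simp [Function.comp, σ.injective.eq_iff]

lemma sum_filter_const (n : ℕ) (T : ℝ) (j : Fin n) (c c' : Fin 3) :
    ∑ x ∈ univ.filter (fun x : Fin n → Fin 3 => x j = c), isingW 3 n T x
      = ∑ x ∈ univ.filter (fun x : Fin n → Fin 3 => x j = c'), isingW 3 n T x := by
  apply Finset.sum_nbij' (i := fun x => (Equiv.swap c c') ∘ x)
    (j := fun x => (Equiv.swap c c') ∘ x)
  · intro x hx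
    simp only [mem_filter, mem_univ, true_and] at hx ⊢
    simp [Function.comp, hx]
  · intro x hx
    simp only [mem_filter, mem_univ, true_and] at hx ⊢
    simp [Function.comp, hx]
  · intro x _
    funext j
    simp [Function.comp]
  · intro x _
    funext j
    simp [Function.comp]
  · intro x _
    exact (isingW_comp 3 n T (Equiv.swap c c') x).symm

def flipAbove (n i : ℕ) (σ : Fin 3 → Fin 3) (x : Fin n → Fin 3) : Fin n → Fin 3 :=
  fun j => if i < j.1 then σ (x j) else x j

lemma flipAbove_invol (n i : ℕ) (c₁ c₂ : Fin 3) (x : Fin n → Fin 3) :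
    flipAbove n i (Equiv.swap c₁ c₂) (flipAbove n i (Equiv.swap c₁ c₂) x) = x := by
  funext j
  by_cases h : i < j.1 <;> simp [flipAbove, h, Equiv.swap_apply_self]

lemma isingW_flip (n : ℕ) (T : ℝ) (c₁ c₂ : Fin 3) (i : ℕ) (hi : i + 1 < n)
    (x : Fin n → Fin 3) (hx : x ⟨i, by omega⟩ = c₁) :
    isingW 3 n T (flipAbove n i (Equiv.swap c₁ c₂) x)
      = isingW 3 n T x * Real.exp (1 / T *
        ((if x ⟨i + 1, hi⟩ = c₂ then (1 : ℝ) else -1)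
          - (if x ⟨i + 1, hi⟩ = c₁ then (1 : ℝ) else -1))) := by
  set y := flipAbove n i (Equiv.swap c₁ c₂) x with hy
  have yle : ∀ (m : ℕ) (hm : m < n), m ≤ i → y ⟨m, hm⟩ = x ⟨m, hm⟩ := by
    intro m hm h
    simp [hy, flipAbove, Nat.not_lt.2 h]
  have ygt : ∀ (m : ℕ) (hm : m < n), i < m →
      y ⟨m, hm⟩ = Equiv.swap c₁ c₂ (x ⟨m, hm⟩) := by
    intro m hm h
    simp [hy, flipAbove, h]
  unfold isingW
  rw [← Real.exp_add, ← mul_add]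
  congr 1
  have hkey : ∀ k : Fin (n-1),
      ((if y ⟨k.1, by have := k.2; omega⟩ = y ⟨k.1 + 1, by have := k.2; omega⟩
          then (1 : ℝ) else -1))
        - ((if x ⟨k.1, by have := k.2; omega⟩ = x ⟨k.1 + 1, by have := k.2; omega⟩
          then (1 : ℝ) else -1))
      = (if k = (⟨i, by omega⟩ : Fin (n-1)) then
          ((if x ⟨i + 1, hi⟩ = c₂ then (1 : ℝ) else -1)
            - (if x ⟨i + 1, hi⟩ = c₁ then (1 : ℝ) else -1)) else 0) := by
    intro k
    rcases lt_trichotomy k.1 i with h | h | h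
    · rw [yle k.1 (by have := k.2; omega) (by omega),
        yle (k.1+1) (by have := k.2; omega) (by omega), sub_self,
        if_neg (show k ≠ (⟨i, by omega⟩ : Fin (n-1)) by
          intro he; have := congrArg Fin.val he; simp at this; omega)]
    · rw [yle k.1 (by have := k.2; omega) (by omega),
        ygt (k.1+1) (by have := k.2; omega) (by omega),
        if_pos (show k = (⟨i, by omega⟩ : Fin (n-1)) from Fin.ext h)]
      have e1 : (⟨k.1, by have := k.2; omega⟩ : Fin n) = ⟨i, by omega⟩ :=
        Fin.ext h
      have e2 : (⟨k.1 + 1, by have := k.2; omega⟩ : Fin n) = ⟨i + 1, hi⟩ :=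
        Fin.ext (by simp [h])
      rw [e1, e2, hx]
      have hiff : (c₁ = Equiv.swap c₁ c₂ (x ⟨i + 1, hi⟩)) ↔ (x ⟨i + 1, hi⟩ = c₂) := by
        constructor
        · intro h
          have h2 := congrArg (Equiv.swap c₁ c₂) h
          rw [Equiv.swap_apply_self, Equiv.swap_apply_left] at h2
          exact h2.symm
        · intro h; rw [h, Equiv.swap_apply_right]
      rw [if_congr hiff rfl rfl,
        if_congr (show (c₁ = x ⟨i+1,hi⟩) ↔ (x ⟨i+1,hi⟩ = c₁) from eq_comm) rfl rfl,
        if_congr (show (x ⟨i+1,hi⟩ = c₂) ↔ (c₂ = x ⟨i+1,hi⟩) from eq_comm) rfl rfl]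
    · rw [ygt k.1 (by have := k.2; omega) (by omega),
        ygt (k.1+1) (by have := k.2; omega) (by omega),
        if_congr (Equiv.injective _).eq_iff rfl rfl, sub_self,
        if_neg (show k ≠ (⟨i, by omega⟩ : Fin (n-1)) by
          intro he; have := congrArg Fin.val he; simp at this; omega)]
  have hsum : (∑ k : Fin (n-1),
        ((if y ⟨k.1, by have := k.2; omega⟩ = y ⟨k.1 + 1, by have := k.2; omega⟩
          then (1 : ℝ) else -1)))
      - (∑ k : Fin (n-1),
        ((if x ⟨k.1, by have := k.2; omega⟩ = x ⟨k.1 + 1, by have := k.2; omega⟩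
          then (1 : ℝ) else -1)))
      = ((if x ⟨i + 1, hi⟩ = c₂ then (1 : ℝ) else -1)
          - (if x ⟨i + 1, hi⟩ = c₁ then (1 : ℝ) else -1)) := by
    rw [← Finset.sum_sub_distrib, Finset.sum_congr rfl (fun k _ => hkey k),
      Finset.sum_ite_eq' univ (⟨i, by omega⟩ : Fin (n-1))]
    simp
  congr 1
  linarith [hsum]

lemma sum_w_exp (n : ℕ) (T : ℝ) (c₁ c₂ : Fin 3) (i : ℕ) (hi : i + 1 < n) :
    ∑ x ∈ univ.filter (fun x : Fin n → Fin 3 => x ⟨i, by omega⟩ = c₁),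
      isingW 3 n T x * Real.exp (1 / T *
        ((if x ⟨i + 1, hi⟩ = c₂ then (1 : ℝ) else -1)
          - (if x ⟨i + 1, hi⟩ = c₁ then (1 : ℝ) else -1)))
    = ∑ x ∈ univ.filter (fun x : Fin n → Fin 3 => x ⟨i, by omega⟩ = c₁),
        isingW 3 n T x := by
  apply Finset.sum_nbij' (i := flipAbove n i (Equiv.swap c₁ c₂))
    (j := flipAbove n i (Equiv.swap c₁ c₂))
  · intro x hx
    simp only [mem_filter, mem_univ, true_and] at hx ⊢
    rw [← hx]
    simp [flipAbove]
  · intro x hx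
    simp only [mem_filter, mem_univ, true_and] at hx ⊢
    rw [← hx]
    simp [flipAbove]
  · intro x _; exact flipAbove_invol n i c₁ c₂ x
  · intro x _; exact flipAbove_invol n i c₁ c₂ x
  · intro x hx
    simp only [mem_filter, mem_univ, true_and] at hx
    exact (isingW_flip n T c₁ c₂ i hi x hx).symm

/-- For the three-state 1-D Ising model, an interior site `i` and distinct colors
`c⁽¹⁾ ≠ c⁽²⁾`:
`∑_{x : x_i = c⁽¹⁾} π(x) exp((1/T)(𝟙{x_{i+1}=c⁽²⁾} - 𝟙{x_{i+1}≠c⁽²⁾} - 𝟙{x_{i+1}=c⁽¹⁾} + 𝟙{x_{i+1}≠c⁽¹⁾})) = 1/3`. -/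
theorem sum_pi_exp_three_state (n : ℕ) (hn : 3 ≤ n) (T : ℝ) (hT : 0 < T)
    (c₁ c₂ : Fin 3) (hc : c₁ ≠ c₂)
    (i : ℕ) (hi1 : 1 ≤ i) (hi2 : i ≤ n - 2) :
    (∑ x ∈ Finset.univ.filter (fun x : Fin n → Fin 3 => x ⟨i, by omega⟩ = c₁),
      isingPi 3 n T x *
        Real.exp (1 / T *
          ((if x ⟨i + 1, by omega⟩ = c₂ then (1 : ℝ) else -1)
            - (if x ⟨i + 1, by omega⟩ = c₁ then (1 : ℝ) else -1)))) = 1 / 3 := by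
  have hi : i + 1 < n := by omega
  set S := ∑ x ∈ univ.filter (fun x : Fin n → Fin 3 => x ⟨i, by omega⟩ = c₁),
      isingW 3 n T x with hS
  have hSpos : 0 < S := by
    apply Finset.sum_pos (fun x _ => Real.exp_pos _)
    exact ⟨fun _ => c₁, by simp⟩
  have hZ : isingZ 3 n T = 3 * S := by
    unfold isingZ
    rw [← Finset.sum_fiberwise univ (fun x : Fin n → Fin 3 => x ⟨i, by omega⟩)
      (isingW 3 n T)]
    have : ∀ c : Fin 3,
        ∑ x ∈ univ.filter (fun x : Fin n → Fin 3 => x ⟨i, by omega⟩ = c),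
          isingW 3 n T x = S := fun c => sum_filter_const n T _ c c₁
    rw [Finset.sum_congr rfl (fun c _ => this c)]
    rw [Finset.sum_const]
    simp [mul_comm]
  have step : (∑ x ∈ univ.filter (fun x : Fin n → Fin 3 => x ⟨i, by omega⟩ = c₁),
      isingPi 3 n T x *
        Real.exp (1 / T *
          ((if x ⟨i + 1, hi⟩ = c₂ then (1 : ℝ) else -1)
            - (if x ⟨i + 1, hi⟩ = c₁ then (1 : ℝ) else -1))))
      = (∑ x ∈ univ.filter (fun x : Fin n → Fin 3 => x ⟨i, by omega⟩ = c₁),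
          isingW 3 n T x *
            Real.exp (1 / T *
              ((if x ⟨i + 1, hi⟩ = c₂ then (1 : ℝ) else -1)
                - (if x ⟨i + 1, hi⟩ = c₁ then (1 : ℝ) else -1)))) / isingZ 3 n T := by
    rw [Finset.sum_div]
    apply Finset.sum_congr rfl
    intro x _
    unfold isingPi
    ring
  rw [step, sum_w_exp n T c₁ c₂ i hi, ← hS, hZ]
  rw [div_eq_div_iff (by positivity) (by norm_num)]
  ring
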